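/- Error reduction for postselection automata: if L ⊆ Σ* is recognized by an RT-PostPFA with error bound ε ∈ (0, 1/2), then L is recognized by some RT-PostPFA with error bound ε²; likewise, if L is recognized by an RT-PostQFA with error bound ε ∈ (0, 1/2), then L is recognized by some RT-PostQFA with error bound ε². In particular, such a machine exists with k-fold tensor-product state space for k = 1 + ⌈log(1/ε + 1)/log(1/ε − 1)⌉, since (ε/(1−ε))^k ≤ ε²/(1−ε²). -/

import Mathlib

noncomputable section

/-- The input alphabet extended with the two endmarkers `¢` and `$`. -/
inductive ESym (α : Type) : Type where
  | cent : ESym α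
  | dollar : ESym α
  | letter : α → ESym α

/-- The state distribution obtained by applying, in order, the matrices for
`¢`, the letters of `w`, and `$` to the standard basis vector at the initial state `0`. -/
def pRun {α : Type} {n : ℕ} (A : ESym α → Matrix (Fin (n + 1)) (Fin (n + 1)) ℝ)
    (w : List α) : Fin (n + 1) → ℝ :=
  (ESym.cent :: (w.map ESym.letter ++ [ESym.dollar])).foldl
    (fun v σ => (A σ).mulVec v) (Pi.single 0 1)

/-- A real-time probabilistic finite automaton with postselection (RT-PostPFA). -/
structure PostPFA (α : Type) where
  n : ℕ
  A : ESym α → Matrix (Fin (n + 1)) (Fin (n + 1)) ℝ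
  nonneg : ∀ σ i j, 0 ≤ A σ i j
  colSum : ∀ σ j, ∑ i, A σ i j = 1
  Qpa : Finset (Fin (n + 1))
  Qpr : Finset (Fin (n + 1))
  disj : Disjoint Qpa Qpr
  postPos : ∀ w : List α,
    0 < (∑ i ∈ Qpa, pRun A w i) + (∑ i ∈ Qpr, pRun A w i)

/-- Acceptance probability before postselection. -/
def PostPFA.pacc {α : Type} (M : PostPFA α) (w : List α) : ℝ :=
  ∑ i ∈ M.Qpa, pRun M.A w i

/-- Rejection probability before postselection. -/
def PostPFA.prej {α : Type} (M : PostPFA α) (w : List α) : ℝ :=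
  ∑ i ∈ M.Qpr, pRun M.A w i

/-- Normalized acceptance probability of an RT-PostPFA. -/
def PostPFA.fa {α : Type} (M : PostPFA α) (w : List α) : ℝ :=
  M.pacc w / (M.pacc w + M.prej w)

/-- Recognition of a language with error bound `ε`. -/
def PostPFA.Recognizes {α : Type} (M : PostPFA α) (L : Set (List α)) (ε : ℝ) : Prop :=
  ∀ w : List α, (w ∈ L → 1 - ε ≤ M.fa w) ∧ (w ∉ L → M.fa w ≤ ε)

/-- The class of languages recognized by RT-PostPFAs with bounded error. -/
def PostS {α : Type} (L : Set (List α)) : Prop :=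
  ∃ (M : PostPFA α) (ε : ℝ), 0 ≤ ε ∧ ε < 1 / 2 ∧ M.Recognizes L ε

/-- Recognition with zero error: `fa = 1` on members, `fa = 0` on non-members. -/
def PostPFA.RecognizesZero {α : Type} (M : PostPFA α) (L : Set (List α)) : Prop :=
  ∀ w : List α, (w ∈ L → M.fa w = 1) ∧ (w ∉ L → M.fa w = 0)

/-- The class of languages recognized by RT-PostPFAs with zero error. -/
def ZPostS {α : Type} (L : Set (List α)) : Prop :=
  ∃ M : PostPFA α, M.RecognizesZero L

/-- The diagonal 0-1 projection matrix supported on a set of states. -/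
def projM {m : ℕ} (S : Finset (Fin m)) : Matrix (Fin m) (Fin m) ℂ :=
  Matrix.diagonal (fun i => if i ∈ S then 1 else 0)

/-- The density matrix obtained by applying, in order, the Kraus families for
`¢`, the letters of `w`, and `$` to the initial density matrix `|q₁⟩⟨q₁|`. -/
def qRun {α : Type} {n : ℕ} {k : ESym α → ℕ}
    (E : ∀ σ : ESym α, Fin (k σ) → Matrix (Fin (n + 1)) (Fin (n + 1)) ℂ)
    (w : List α) : Matrix (Fin (n + 1)) (Fin (n + 1)) ℂ :=
  (ESym.cent :: (w.map ESym.letter ++ [ESym.dollar])).foldl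
    (fun ρ σ => ∑ i : Fin (k σ), E σ i * ρ * (E σ i).conjTranspose)
    (Matrix.single 0 0 1)

/-- A real-time quantum finite automaton with postselection (RT-PostQFA). -/
structure PostQFA (α : Type) where
  n : ℕ
  k : ESym α → ℕ
  E : ∀ σ : ESym α, Fin (k σ) → Matrix (Fin (n + 1)) (Fin (n + 1)) ℂ
  kraus : ∀ σ : ESym α, ∑ i : Fin (k σ), (E σ i).conjTranspose * E σ i = 1
  Qpa : Finset (Fin (n + 1))
  Qpr : Finset (Fin (n + 1))
  disj : Disjoint Qpa Qpr
  postPos : ∀ w : List α,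
    0 < ((projM Qpa * qRun E w).trace).re + ((projM Qpr * qRun E w).trace).re

/-- Acceptance probability before postselection. -/
def PostQFA.pacc {α : Type} (M : PostQFA α) (w : List α) : ℝ :=
  ((projM M.Qpa * qRun M.E w).trace).re

/-- Rejection probability before postselection. -/
def PostQFA.prej {α : Type} (M : PostQFA α) (w : List α) : ℝ :=
  ((projM M.Qpr * qRun M.E w).trace).re

/-- Normalized acceptance probability of an RT-PostQFA. -/
def PostQFA.fa {α : Type} (M : PostQFA α) (w : List α) : ℝ :=
  M.pacc w / (M.pacc w + M.prej w)

/-- Recognition of a language with error bound `ε`. -/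
def PostQFA.Recognizes {α : Type} (M : PostQFA α) (L : Set (List α)) (ε : ℝ) : Prop :=
  ∀ w : List α, (w ∈ L → 1 - ε ≤ M.fa w) ∧ (w ∉ L → M.fa w ≤ ε)

/-- The class of languages recognized by RT-PostQFAs with bounded error. -/
def PostQAL {α : Type} (L : Set (List α)) : Prop :=
  ∃ (M : PostQFA α) (ε : ℝ), 0 ≤ ε ∧ ε < 1 / 2 ∧ M.Recognizes L ε

/-- Recognition with zero error: `fa = 1` on members, `fa = 0` on non-members. -/
def PostQFA.RecognizesZero {α : Type} (M : PostQFA α) (L : Set (List α)) : Prop :=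
  ∀ w : List α, (w ∈ L → M.fa w = 1) ∧ (w ∉ L → M.fa w = 0)

/-- The class of languages recognized by RT-PostQFAs with zero error. -/
def ZPostQAL {α : Type} (L : Set (List α)) : Prop :=
  ∃ M : PostQFA α, M.RecognizesZero L

/-! Run `K` copies of the machine in parallel (Kronecker powers of the transition matrices,
resp. of the Kraus operators) and postselect on "all copies accept" versus "all copies reject".
The unnormalised acceptance and rejection probabilities become `pᵃ(w)^K` and `pʳ(w)^K`, so the
odds of error, at most `ε/(1-ε)`, are raised to the `K`-th power; `ε²/(1-ε²)` are the odds of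
error `ε²`. In the quantum case `pᵃ(w)^K` is still real because the density matrices stay
positive semidefinite. -/

namespace Matrix

open Finset

variable {κ l m n R : Type*} [Fintype κ]

def piKron [CommMonoid R] (A : κ → Matrix m n R) : Matrix (κ → m) (κ → n) R :=
  of fun i j => ∏ t, A t (i t) (j t)

@[simp]
lemma piKron_apply [CommMonoid R] (A : κ → Matrix m n R) (i : κ → m) (j : κ → n) :
    piKron A i j = ∏ t, A t (i t) (j t) := rfl

lemma piKron_mul [DecidableEq κ] [CommSemiring R] [Fintype m] (A : κ → Matrix l m R)
    (B : κ → Matrix m n R) : piKron A * piKron B = piKron fun t => A t * B t := by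
  ext i j
  simp only [mul_apply, piKron_apply, ← prod_mul_distrib, Fintype.prod_sum]

lemma conjTranspose_piKron [CommSemiring R] [StarRing R] (A : κ → Matrix m n R) :
    (piKron A)ᴴ = piKron fun t => (A t)ᴴ := by
  ext i j
  simp [star_prod]

lemma piKron_one [CommSemiring R] [DecidableEq m] :
    piKron (fun _ : κ => (1 : Matrix m m R)) = 1 := by
  ext i j
  simp only [piKron_apply, one_apply, prod_boole, mem_univ, true_implies, funext_iff]

lemma piKron_single [CommSemiring R] [DecidableEq m] [DecidableEq n] (a : κ → m) (b : κ → n) :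
    piKron (fun t => single (a t) (b t) (1 : R)) = single a b 1 := by
  ext i j
  simp only [piKron_apply, single_apply, prod_boole, mem_univ, true_implies, funext_iff,
    forall_and]

lemma sum_piKron [DecidableEq κ] [CommSemiring R] {ι : Type*} [Fintype ι]
    (F : κ → ι → Matrix m n R) :
    ∑ c : κ → ι, piKron (fun t => F t (c t)) = piKron fun t => ∑ x, F t x := by
  ext i j
  simp only [sum_apply, piKron_apply, Fintype.prod_sum]

lemma sum_piKron_apply [DecidableEq κ] [CommSemiring R] [Fintype m] (A : κ → Matrix m n R)
    (j : κ → n) : ∑ i, piKron A i j = ∏ t, ∑ x, A t x (j t) :=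
  (Fintype.prod_sum fun t x => A t x (j t)).symm

lemma piKron_mulVec [DecidableEq κ] [CommSemiring R] [Fintype n] (A : κ → Matrix m n R)
    (v : κ → n → R) :
    piKron A *ᵥ (fun j => ∏ t, v t (j t)) = fun i => ∏ t, (A t *ᵥ v t) (i t) := by
  ext i
  simp only [mulVec, dotProduct, piKron_apply, ← prod_mul_distrib, Fintype.prod_sum]

lemma sum_piKron_mul_piKron_mul_conjTranspose [DecidableEq κ] [CommSemiring R] [StarRing R]
    [Fintype m] {ι : Type*} [Fintype ι] (E : κ → ι → Matrix m m R)
    (ρ : κ → Matrix m m R) :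
    ∑ c : κ → ι, piKron (fun t => E t (c t)) * piKron ρ * (piKron fun t => E t (c t))ᴴ =
      piKron fun t => ∑ x, E t x * ρ t * (E t x)ᴴ := by
  simp only [conjTranspose_piKron, piKron_mul]
  exact sum_piKron fun t x => E t x * ρ t * (E t x)ᴴ

end Matrix

section Boosting

variable {a b ε δ : ℝ}

lemma one_sub_le_div_add_iff (hab : 0 < a + b) :
    1 - ε ≤ a / (a + b) ↔ (1 - ε) * b ≤ ε * a := by
  rw [le_div_iff₀ hab]
  constructor <;> intro h <;> linarith

lemma pow_add_pow_pos (ha : 0 ≤ a) (hb : 0 ≤ b) (hab : 0 < a + b) (K : ℕ) :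
    0 < a ^ K + b ^ K := by
  rcases ha.eq_or_lt with rfl | ha'
  · rw [zero_add] at hab
    exact add_pos_of_nonneg_of_pos (pow_nonneg le_rfl K) (pow_pos hab K)
  · exact add_pos_of_pos_of_nonneg (pow_pos ha' K) (pow_nonneg hb K)

lemma one_sub_le_pow_div_pow_add_pow (ha : 0 ≤ a) (hb : 0 ≤ b) (hab : 0 < a + b)
    (hε : ε < 1) (hδ : δ < 1) {K : ℕ} (hK : (ε / (1 - ε)) ^ K ≤ δ / (1 - δ))
    (h : 1 - ε ≤ a / (a + b)) :
    1 - δ ≤ a ^ K / (a ^ K + b ^ K) := by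
  rw [one_sub_le_div_add_iff (pow_add_pow_pos ha hb hab K)]
  rw [one_sub_le_div_add_iff hab] at h
  have hb_le : b ≤ ε / (1 - ε) * a := by
    rw [div_mul_eq_mul_div, le_div_iff₀ (by linarith)]
    linarith
  have hbK : b ^ K ≤ δ / (1 - δ) * a ^ K :=
    calc b ^ K ≤ (ε / (1 - ε) * a) ^ K := pow_le_pow_left₀ hb hb_le K
      _ = (ε / (1 - ε)) ^ K * a ^ K := mul_pow _ _ _
      _ ≤ δ / (1 - δ) * a ^ K := mul_le_mul_of_nonneg_right hK (pow_nonneg ha K)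
  rwa [div_mul_eq_mul_div, le_div_iff₀ (by linarith), mul_comm] at hbK

lemma pow_div_pow_add_pow_le (ha : 0 ≤ a) (hb : 0 ≤ b) (hab : 0 < a + b)
    (hε : ε < 1) (hδ : δ < 1) {K : ℕ} (hK : (ε / (1 - ε)) ^ K ≤ δ / (1 - δ))
    (h : a / (a + b) ≤ ε) :
    a ^ K / (a ^ K + b ^ K) ≤ δ := by
  have complement : ∀ {x y : ℝ}, 0 < x + y → x / (x + y) = 1 - y / (y + x) := by
    intro x y hxy
    rw [add_comm y x, eq_sub_iff_add_eq, ← add_div, div_self hxy.ne']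
  have hba : 0 < b + a := by linarith
  rw [complement hab] at h
  rw [complement (pow_add_pow_pos ha hb hab K)]
  linarith [one_sub_le_pow_div_pow_add_pow hb ha hba hε hδ hK (by linarith)]

end Boosting

lemma le_pow_natCeil_log_div_log {a b : ℝ} (ha : 0 < a) (hb : 1 < b) :
    a ≤ b ^ ⌈Real.log a / Real.log b⌉₊ := by
  have hlogb : 0 < Real.log b := Real.log_pos hb
  rw [← Real.log_le_log_iff ha (pow_pos (by linarith) _), Real.log_pow,
    ← div_le_iff₀ hlogb]
  exact Nat.le_ceil _

lemma div_one_sub_pow_le_sq_div_one_sub_sq {ε : ℝ} (hε0 : 0 < ε) (hε : ε < 1 / 2) :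
    (ε / (1 - ε)) ^ (1 + ⌈Real.log (1 / ε + 1) / Real.log (1 / ε - 1)⌉₊) ≤
      ε ^ 2 / (1 - ε ^ 2) := by
  set m := ⌈Real.log (1 / ε + 1) / Real.log (1 / ε - 1)⌉₊
  have hε1 : 0 < 1 - ε := by linarith
  have hinv_sub : (1 / ε - 1)⁻¹ = ε / (1 - ε) := by field_simp
  have hinv_add : (1 / ε + 1)⁻¹ = ε / (1 + ε) := by field_simp
  have hm : (ε / (1 - ε)) ^ m ≤ ε / (1 + ε) := by
    have hbase : 1 < 1 / ε - 1 := by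
      rw [lt_sub_iff_add_lt, lt_div_iff₀ hε0]
      linarith
    rw [← hinv_sub, ← hinv_add, inv_pow]
    exact inv_anti₀ (by positivity) (le_pow_natCeil_log_div_log (by positivity) hbase)
  calc (ε / (1 - ε)) ^ (1 + m) = ε / (1 - ε) * (ε / (1 - ε)) ^ m := by rw [pow_add, pow_one]
    _ ≤ ε / (1 - ε) * (ε / (1 + ε)) := mul_le_mul_of_nonneg_left hm (by positivity)
    _ = ε ^ 2 / (1 - ε ^ 2) := by rw [div_mul_div_comm, ← sq]; ring

open Finset Matrix

def tensorIndexEquiv (n K : ℕ) : (Fin K → Fin (n + 1)) ≃ Fin ((n + 1) ^ K - 1 + 1) :=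
  finFunctionFinEquiv.trans (finCongr (Nat.succ_pred_eq_of_pos (Nat.pow_pos n.succ_pos)).symm)

lemma tensorIndexEquiv_symm_zero (n K : ℕ) : (tensorIndexEquiv n K).symm 0 = fun _ => 0 := by
  ext t
  simp [tensorIndexEquiv, finFunctionFinEquiv_symm_apply_val]

section Tensor

variable {κ ι ι' R : Type*} [Fintype κ] [DecidableEq κ] [CommSemiring R]

lemma sum_map_piFinset_prod (e : (κ → ι) ≃ ι') (S : Finset ι) (v : ι → R) :
    ∑ i ∈ (Fintype.piFinset fun _ => S).map e.toEmbedding, ∏ t, v (e.symm i t) =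
      (∑ x ∈ S, v x) ^ Fintype.card κ := by
  simp [sum_map, sum_prod_piFinset, prod_const]

lemma disjoint_map_piFinset [Nonempty κ] (e : (κ → ι) ≃ ι') {S T : Finset ι}
    (h : Disjoint S T) :
    Disjoint ((Fintype.piFinset fun _ => S).map e.toEmbedding)
      ((Fintype.piFinset fun _ => T).map e.toEmbedding) :=
  (disjoint_map _).2 (Fintype.piFinset_disjoint_of_disjoint _ _ (a := Classical.arbitrary κ) h)

end Tensor

section Probabilistic

variable {α : Type} {n n' : ℕ}

lemma pRun_nonneg (A : ESym α → Matrix (Fin (n + 1)) (Fin (n + 1)) ℝ)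
    (hA : ∀ σ i j, 0 ≤ A σ i j) (w : List α) (i : Fin (n + 1)) : 0 ≤ pRun A w i := by
  suffices ∀ (l : List (ESym α)) (v : Fin (n + 1) → ℝ), 0 ≤ v →
      0 ≤ l.foldl (fun v σ => (A σ).mulVec v) v from
    this _ _ (Pi.single_nonneg.2 zero_le_one) i
  intro l
  induction l with
  | nil => exact fun _ hv => hv
  | cons σ l ih =>
    exact fun v hv => ih _ fun i =>
      (sum_nonneg fun j _ => mul_nonneg (hA σ i j) (hv j) : 0 ≤ ∑ j, A σ i j * v j)

lemma pRun_reindex_piKron {K : ℕ} (A : ESym α → Matrix (Fin (n + 1)) (Fin (n + 1)) ℝ)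
    (e : (Fin K → Fin (n + 1)) ≃ Fin (n' + 1)) (he : e.symm 0 = fun _ => 0) (w : List α) :
    pRun (fun σ => reindex e e (piKron fun _ => A σ)) w =
      fun i => ∏ t, pRun A w (e.symm i t) := by
  have hinit : (Pi.single 0 1 : Fin (n' + 1) → ℝ) =
      fun i => ∏ t, (Pi.single 0 1 : Fin (n + 1) → ℝ) (e.symm i t) := by
    ext i
    simp only [Pi.single_apply, prod_boole, mem_univ, true_implies]
    refine if_congr ?_ rfl rfl
    rw [← e.symm.injective.eq_iff, he, funext_iff]
  unfold pRun
  rw [hinit]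
  refine List.foldl_hom (fun (v : Fin (n + 1) → ℝ) i => ∏ t, v (e.symm i t)) fun v σ => ?_
  dsimp only
  rw [reindex_apply, submatrix_mulVec_equiv, Equiv.symm_symm]
  simp only [Function.comp_def, Equiv.symm_apply_apply]
  exact congrArg (· ∘ e.symm) (piKron_mulVec (fun _ => A σ) fun _ => v)

namespace PostPFA

lemma pacc_nonneg (M : PostPFA α) (w : List α) : 0 ≤ M.pacc w :=
  sum_nonneg fun i _ => pRun_nonneg M.A M.nonneg w i

lemma prej_nonneg (M : PostPFA α) (w : List α) : 0 ≤ M.prej w :=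
  sum_nonneg fun i _ => pRun_nonneg M.A M.nonneg w i

lemma sum_pRun_tensorPow (M : PostPFA α) (K : ℕ) (S : Finset (Fin (M.n + 1))) (w : List α) :
    ∑ i ∈ (Fintype.piFinset fun _ => S).map (tensorIndexEquiv M.n K).toEmbedding,
      pRun (fun σ => reindex (tensorIndexEquiv M.n K) (tensorIndexEquiv M.n K)
        (piKron fun _ : Fin K => M.A σ)) w i = (∑ i ∈ S, pRun M.A w i) ^ K := by
  rw [pRun_reindex_piKron _ _ (tensorIndexEquiv_symm_zero M.n K), sum_map_piFinset_prod,
    Fintype.card_fin]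

def tensorPow (M : PostPFA α) (K : ℕ) (hK : 0 < K) : PostPFA α where
  n := (M.n + 1) ^ K - 1
  A σ := reindex (tensorIndexEquiv M.n K) (tensorIndexEquiv M.n K) (piKron fun _ => M.A σ)
  nonneg σ i j := by
    simp only [reindex_apply, submatrix_apply, piKron_apply]
    exact prod_nonneg fun t _ => M.nonneg σ _ _
  colSum σ j := by
    simp only [reindex_apply, submatrix_apply]
    rw [(tensorIndexEquiv M.n K).symm.sum_comp fun f => piKron (fun _ => M.A σ) f _,
      sum_piKron_apply]
    simp only [M.colSum, prod_const_one]
  Qpa := (Fintype.piFinset fun _ => M.Qpa).map (tensorIndexEquiv M.n K).toEmbedding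
  Qpr := (Fintype.piFinset fun _ => M.Qpr).map (tensorIndexEquiv M.n K).toEmbedding
  disj := haveI : Nonempty (Fin K) := ⟨⟨0, hK⟩⟩; disjoint_map_piFinset _ M.disj
  postPos w := by
    rw [sum_pRun_tensorPow, sum_pRun_tensorPow]
    exact pow_add_pow_pos (M.pacc_nonneg w) (M.prej_nonneg w) (M.postPos w) K

lemma pacc_tensorPow (M : PostPFA α) {K : ℕ} (hK : 0 < K) (w : List α) :
    (M.tensorPow K hK).pacc w = M.pacc w ^ K :=
  M.sum_pRun_tensorPow K M.Qpa w

lemma prej_tensorPow (M : PostPFA α) {K : ℕ} (hK : 0 < K) (w : List α) :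
    (M.tensorPow K hK).prej w = M.prej w ^ K :=
  M.sum_pRun_tensorPow K M.Qpr w

lemma fa_tensorPow (M : PostPFA α) {K : ℕ} (hK : 0 < K) (w : List α) :
    (M.tensorPow K hK).fa w = M.pacc w ^ K / (M.pacc w ^ K + M.prej w ^ K) := by
  rw [fa, pacc_tensorPow, prej_tensorPow]

lemma Recognizes.tensorPow {M : PostPFA α} {L : Set (List α)} {ε δ : ℝ}
    (hM : M.Recognizes L ε) (hε : ε < 1) (hδ : δ < 1) {K : ℕ} (hK : 0 < K)
    (hKεδ : (ε / (1 - ε)) ^ K ≤ δ / (1 - δ)) :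
    (M.tensorPow K hK).Recognizes L δ := fun w =>
  ⟨fun hw => M.fa_tensorPow hK w ▸ one_sub_le_pow_div_pow_add_pow (M.pacc_nonneg w)
      (M.prej_nonneg w) (M.postPos w) hε hδ hKεδ ((hM w).1 hw),
    fun hw => M.fa_tensorPow hK w ▸ pow_div_pow_add_pow_le (M.pacc_nonneg w)
      (M.prej_nonneg w) (M.postPos w) hε hδ hKεδ ((hM w).2 hw)⟩

end PostPFA

end Probabilistic

section Quantum

open scoped ComplexOrder

variable {α : Type} {n n' : ℕ}

lemma qRun_posSemidef {k : ESym α → ℕ}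
    (E : ∀ σ : ESym α, Fin (k σ) → Matrix (Fin (n + 1)) (Fin (n + 1)) ℂ) (w : List α) :
    (qRun E w).PosSemidef := by
  suffices ∀ (l : List (ESym α)) (ρ : Matrix (Fin (n + 1)) (Fin (n + 1)) ℂ), ρ.PosSemidef →
      (l.foldl (fun ρ σ => ∑ i : Fin (k σ), E σ i * ρ * (E σ i)ᴴ) ρ).PosSemidef from
    this _ _ (diagonal_single (0 : Fin (n + 1)) (1 : ℂ) ▸
      PosSemidef.diagonal (Pi.single_nonneg.2 zero_le_one))
  intro l
  induction l with
  | nil => exact fun _ hρ => hρ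
  | cons σ l ih =>
    exact fun ρ hρ => ih _ (posSemidef_sum _ fun i _ => hρ.mul_mul_conjTranspose_same (E σ i))

lemma trace_projM_mul {m : ℕ} (S : Finset (Fin m)) (ρ : Matrix (Fin m) (Fin m) ℂ) :
    (projM S * ρ).trace = ∑ i ∈ S, ρ i i := by
  simp only [projM, trace, diag_apply, diagonal_mul, ite_mul, one_mul, zero_mul, sum_ite_mem,
    univ_inter]

lemma ofReal_re_sum_diag {m : ℕ} {ρ : Matrix (Fin m) (Fin m) ℂ} (hρ : ρ.PosSemidef)
    (S : Finset (Fin m)) : (((∑ i ∈ S, ρ i i).re : ℝ) : ℂ) = ∑ i ∈ S, ρ i i :=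
  (Complex.eq_re_of_ofReal_le (sum_nonneg fun _ _ => hρ.diag_nonneg)).symm

lemma qRun_reindex_piKron {K : ℕ} {k : ESym α → ℕ}
    (E : ∀ σ : ESym α, Fin (k σ) → Matrix (Fin (n + 1)) (Fin (n + 1)) ℂ)
    (e : (Fin K → Fin (n + 1)) ≃ Fin (n' + 1)) (he : e.symm 0 = fun _ => 0) (w : List α) :
    qRun (k := fun σ => k σ ^ K)
        (fun σ p => reindex e e (piKron fun t => E σ (finFunctionFinEquiv.symm p t))) w =
      reindex e e (piKron fun _ => qRun E w) := by
  have hinit : (single 0 0 1 : Matrix (Fin (n' + 1)) (Fin (n' + 1)) ℂ) =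
      reindex e e (piKron fun _ => single 0 0 1) := by
    rw [piKron_single, reindex_apply, submatrix_single_equiv, Equiv.symm_symm, ← he,
      e.apply_symm_apply]
  unfold qRun
  rw [hinit]
  refine List.foldl_hom (fun (ρ : Matrix (Fin (n + 1)) (Fin (n + 1)) ℂ) =>
    reindex e e (piKron fun _ => ρ)) fun ρ σ => ?_
  have hsum := sum_piKron_mul_piKron_mul_conjTranspose (fun _ : Fin K => E σ) fun _ => ρ
  rw [← (finFunctionFinEquiv (m := k σ) (n := K)).symm.sum_comp] at hsum
  simp only [conjTranspose_reindex]
  simp only [← coe_reindexAlgEquiv ℂ ℂ, ← map_mul, ← map_sum]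
  exact congrArg _ hsum

lemma sum_reindex_piKron_kraus {K k : ℕ} (E : Fin k → Matrix (Fin (n + 1)) (Fin (n + 1)) ℂ)
    (hE : ∑ i, (E i)ᴴ * E i = 1) (e : (Fin K → Fin (n + 1)) ≃ Fin (n' + 1)) :
    ∑ p, (reindex e e (piKron fun t => E (finFunctionFinEquiv.symm p t)))ᴴ *
      reindex e e (piKron fun t => E (finFunctionFinEquiv.symm p t)) = 1 := by
  have hsum :
      ∑ c : Fin K → Fin k, (piKron fun t => E (c t))ᴴ * piKron (fun t => E (c t)) = 1 := by
    simp only [conjTranspose_piKron, piKron_mul]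
    rw [sum_piKron fun _ x => (E x)ᴴ * E x, hE, piKron_one]
  rw [← (finFunctionFinEquiv (m := k) (n := K)).symm.sum_comp] at hsum
  simp only [conjTranspose_reindex]
  simp only [← coe_reindexAlgEquiv ℂ ℂ, ← map_mul, ← map_sum, hsum, map_one]

def krausTensorPow {k : ℕ} (E : Fin k → Matrix (Fin (n + 1)) (Fin (n + 1)) ℂ) (K : ℕ) :
    Fin (k ^ K) → Matrix (Fin ((n + 1) ^ K - 1 + 1)) (Fin ((n + 1) ^ K - 1 + 1)) ℂ :=
  fun p => reindex (tensorIndexEquiv n K) (tensorIndexEquiv n K)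
    (piKron fun t => E (finFunctionFinEquiv.symm p t))

lemma re_trace_projM_mul_qRun_krausTensorPow {k : ESym α → ℕ}
    (E : ∀ σ : ESym α, Fin (k σ) → Matrix (Fin (n + 1)) (Fin (n + 1)) ℂ) (K : ℕ)
    (S : Finset (Fin (n + 1))) (w : List α) :
    ((projM ((Fintype.piFinset fun _ => S).map (tensorIndexEquiv n K).toEmbedding) *
        qRun (fun σ => krausTensorPow (E σ) K) w).trace).re =
      ((∑ i ∈ S, qRun E w i i) ^ K).re := by
  unfold krausTensorPow
  rw [qRun_reindex_piKron E _ (tensorIndexEquiv_symm_zero n K), trace_projM_mul]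
  simp only [reindex_apply, submatrix_apply, piKron_apply]
  rw [sum_map_piFinset_prod _ _ fun x => qRun E w x x, Fintype.card_fin]

namespace PostQFA

lemma ofReal_pacc (M : PostQFA α) (w : List α) :
    (M.pacc w : ℂ) = ∑ i ∈ M.Qpa, qRun M.E w i i := by
  rw [pacc, trace_projM_mul, ofReal_re_sum_diag (qRun_posSemidef M.E w)]

lemma ofReal_prej (M : PostQFA α) (w : List α) :
    (M.prej w : ℂ) = ∑ i ∈ M.Qpr, qRun M.E w i i := by
  rw [prej, trace_projM_mul, ofReal_re_sum_diag (qRun_posSemidef M.E w)]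

lemma pacc_nonneg (M : PostQFA α) (w : List α) : 0 ≤ M.pacc w := by
  rw [pacc, trace_projM_mul, ← Complex.zero_le_real, ofReal_re_sum_diag (qRun_posSemidef M.E w)]
  exact sum_nonneg fun _ _ => (qRun_posSemidef M.E w).diag_nonneg

lemma prej_nonneg (M : PostQFA α) (w : List α) : 0 ≤ M.prej w := by
  rw [prej, trace_projM_mul, ← Complex.zero_le_real, ofReal_re_sum_diag (qRun_posSemidef M.E w)]
  exact sum_nonneg fun _ _ => (qRun_posSemidef M.E w).diag_nonneg

lemma re_trace_projM_mul_qRun_tensorPow_Qpa (M : PostQFA α) (K : ℕ) (w : List α) :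
    ((projM ((Fintype.piFinset fun _ => M.Qpa).map (tensorIndexEquiv M.n K).toEmbedding) *
        qRun (fun σ => krausTensorPow (M.E σ) K) w).trace).re = M.pacc w ^ K := by
  rw [re_trace_projM_mul_qRun_krausTensorPow, ← ofReal_pacc, ← Complex.ofReal_pow,
    Complex.ofReal_re]

lemma re_trace_projM_mul_qRun_tensorPow_Qpr (M : PostQFA α) (K : ℕ) (w : List α) :
    ((projM ((Fintype.piFinset fun _ => M.Qpr).map (tensorIndexEquiv M.n K).toEmbedding) *
        qRun (fun σ => krausTensorPow (M.E σ) K) w).trace).re = M.prej w ^ K := by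
  rw [re_trace_projM_mul_qRun_krausTensorPow, ← ofReal_prej, ← Complex.ofReal_pow,
    Complex.ofReal_re]

def tensorPow (M : PostQFA α) (K : ℕ) (hK : 0 < K) : PostQFA α where
  n := (M.n + 1) ^ K - 1
  k σ := M.k σ ^ K
  E σ := krausTensorPow (M.E σ) K
  kraus σ := sum_reindex_piKron_kraus (M.E σ) (M.kraus σ) _
  Qpa := (Fintype.piFinset fun _ => M.Qpa).map (tensorIndexEquiv M.n K).toEmbedding
  Qpr := (Fintype.piFinset fun _ => M.Qpr).map (tensorIndexEquiv M.n K).toEmbedding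
  disj := haveI : Nonempty (Fin K) := ⟨⟨0, hK⟩⟩; disjoint_map_piFinset _ M.disj
  postPos w := by
    rw [re_trace_projM_mul_qRun_tensorPow_Qpa, re_trace_projM_mul_qRun_tensorPow_Qpr]
    exact pow_add_pow_pos (M.pacc_nonneg w) (M.prej_nonneg w) (M.postPos w) K

lemma pacc_tensorPow (M : PostQFA α) {K : ℕ} (hK : 0 < K) (w : List α) :
    (M.tensorPow K hK).pacc w = M.pacc w ^ K :=
  M.re_trace_projM_mul_qRun_tensorPow_Qpa K w

lemma prej_tensorPow (M : PostQFA α) {K : ℕ} (hK : 0 < K) (w : List α) :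
    (M.tensorPow K hK).prej w = M.prej w ^ K :=
  M.re_trace_projM_mul_qRun_tensorPow_Qpr K w

lemma fa_tensorPow (M : PostQFA α) {K : ℕ} (hK : 0 < K) (w : List α) :
    (M.tensorPow K hK).fa w = M.pacc w ^ K / (M.pacc w ^ K + M.prej w ^ K) := by
  rw [fa, pacc_tensorPow, prej_tensorPow]

lemma Recognizes.tensorPow {M : PostQFA α} {L : Set (List α)} {ε δ : ℝ}
    (hM : M.Recognizes L ε) (hε : ε < 1) (hδ : δ < 1) {K : ℕ} (hK : 0 < K)
    (hKεδ : (ε / (1 - ε)) ^ K ≤ δ / (1 - δ)) :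
    (M.tensorPow K hK).Recognizes L δ := fun w =>
  ⟨fun hw => M.fa_tensorPow hK w ▸ one_sub_le_pow_div_pow_add_pow (M.pacc_nonneg w)
      (M.prej_nonneg w) (M.postPos w) hε hδ hKεδ ((hM w).1 hw),
    fun hw => M.fa_tensorPow hK w ▸ pow_div_pow_add_pow_le (M.pacc_nonneg w)
      (M.prej_nonneg w) (M.postPos w) hε hδ hKεδ ((hM w).2 hw)⟩

end PostQFA

end Quantum

theorem error_reduction_general {α : Type} (L : Set (List α)) (ε : ℝ)
    (hε0 : 0 < ε) (hε : ε < 1 / 2) :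
    ((∃ M : PostPFA α, M.Recognizes L ε) → ∃ M : PostPFA α, M.Recognizes L (ε ^ 2)) ∧
      ((∃ M : PostQFA α, M.Recognizes L ε) → ∃ M : PostQFA α, M.Recognizes L (ε ^ 2)) ∧
      (ε / (1 - ε)) ^ (1 + ⌈Real.log (1 / ε + 1) / Real.log (1 / ε - 1)⌉₊) ≤
        ε ^ 2 / (1 - ε ^ 2) := by
  have hK := div_one_sub_pow_le_sq_div_one_sub_sq hε0 hε
  have hK0 : 0 < 1 + ⌈Real.log (1 / ε + 1) / Real.log (1 / ε - 1)⌉₊ := by positivity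
  have hε1 : ε < 1 := by linarith
  have hε2 : ε ^ 2 < 1 := by nlinarith
  exact ⟨fun ⟨M, hM⟩ => ⟨M.tensorPow _ hK0, hM.tensorPow hε1 hε2 hK0 hK⟩,
    fun ⟨M, hM⟩ => ⟨M.tensorPow _ hK0, hM.tensorPow hε1 hε2 hK0 hK⟩, hK⟩

/-- Error reduction for postselection automata: error bound `ε ∈ (0, 1/2)` can be
improved to `ε²`, both probabilistically and quantumly; moreover the number of copies
`k = 1 + ⌈log(1/ε + 1) / log(1/ε − 1)⌉` satisfies `(ε/(1−ε))^k ≤ ε²/(1−ε²)`. -/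
theorem error_reduction {α : Type} [Fintype α] (L : Set (List α)) (ε : ℝ)
    (hε0 : 0 < ε) (hε : ε < 1 / 2) :
    ((∃ M : PostPFA α, M.Recognizes L ε) → ∃ M : PostPFA α, M.Recognizes L (ε ^ 2)) ∧
      ((∃ M : PostQFA α, M.Recognizes L ε) → ∃ M : PostQFA α, M.Recognizes L (ε ^ 2)) ∧
      (ε / (1 - ε)) ^ (1 + ⌈Real.log (1 / ε + 1) / Real.log (1 / ε - 1)⌉₊) ≤
        ε ^ 2 / (1 - ε ^ 2) :=
  error_reduction_general L ε hε0 hε
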